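/- Let C = {C_1,…,C_k} be a clustering of a finite set X ⊆ ℝ^m with centers μ_j and radii r(C_j), and let ρ ∈ (1/2, 1]. Suppose for every j ∈ [k] there is a representative z_j ∈ C_j with d(z_j, μ_j) < (2ρ−1)·r(C_j). Then for the truthful ρ global distance-weak oracle Q and every x ∈ X: Q(z_j, x) = 1 if and only if x ∈ C_j; hence there is exactly one index j with Q(z_j, x) = 1, and the weak pairwise cluster-assignment query using the representatives z_1,…,z_k returns the correct cluster index for every point. -/

import Mathlib

/-!
A representative `z` with `d(z, μ) < (2ρ - 1) r` is within `2ρ r` of every point of its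
cluster by the triangle inequality through the center, so the oracle is never confused on
`(z, x)` with `x` in the cluster of `z`; when `x` lies in another cluster the oracle cannot
answer `1`. Hence `Q(z_j, x) = 1` exactly for the cluster containing `x`.
-/

open Finset
open scoped Classical

/-- The center (mean) of a finite cluster of points in Euclidean space. -/
noncomputable def ctr {m : ℕ} (C : Finset (EuclideanSpace ℝ (Fin m))) : EuclideanSpace ℝ (Fin m) :=
  (C.card : ℝ)⁻¹ • ∑ x ∈ C, x

/-- The radius of a cluster: the maximal distance of a member to the center. -/
noncomputable def rad {m : ℕ} (C : Finset (EuclideanSpace ℝ (Fin m))) : ℝ :=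
  sSup ((fun x => dist x (ctr C)) '' (C : Set (EuclideanSpace ℝ (Fin m))))

/-- Confusion predicate for the (ν, ρ) local distance-weak oracle. -/
def LocalConfused {m k : ℕ} (Cl : Fin k → Finset (EuclideanSpace ℝ (Fin m))) (ν ρ : ℝ)
    (x y : EuclideanSpace ℝ (Fin m)) : Prop :=
  (∃ i j, i ≠ j ∧ x ∈ Cl i ∧ y ∈ Cl j ∧
    dist x y < (ν - 1) * min (dist x (ctr (Cl i))) (dist y (ctr (Cl j)))) ∨
  (∃ i, x ∈ Cl i ∧ y ∈ Cl i ∧ 2 * ρ * rad (Cl i) < dist x y)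

/-- Confusion predicate for the ρ global distance-weak oracle. -/
def GlobalConfused {m k : ℕ} (Cl : Fin k → Finset (EuclideanSpace ℝ (Fin m))) (ρ : ℝ)
    (x y : EuclideanSpace ℝ (Fin m)) : Prop :=
  (∃ i j, i ≠ j ∧ x ∈ Cl i ∧ y ∈ Cl j ∧
    (ρ * rad (Cl i) < dist x (ctr (Cl i)) ∨ ρ * rad (Cl j) < dist y (ctr (Cl j)))) ∨
  (∃ i, x ∈ Cl i ∧ y ∈ Cl i ∧ 2 * ρ * rad (Cl i) < dist x y)

/-- Two points lie in the same cluster. -/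
def SameCluster {m k : ℕ} (Cl : Fin k → Finset (EuclideanSpace ℝ (Fin m)))
    (x y : EuclideanSpace ℝ (Fin m)) : Prop :=
  ∃ i, x ∈ Cl i ∧ y ∈ Cl i

/-- The truthful (ν, ρ) local distance-weak oracle: answers 0 on confused pairs,
1 on same-cluster non-confused pairs, and -1 on different-cluster non-confused pairs. -/
noncomputable def localQ {m k : ℕ} (Cl : Fin k → Finset (EuclideanSpace ℝ (Fin m))) (ν ρ : ℝ)
    (x y : EuclideanSpace ℝ (Fin m)) : ℤ :=
  if LocalConfused Cl ν ρ x y then 0 else if SameCluster Cl x y then 1 else -1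

/-- The truthful ρ global distance-weak oracle. -/
noncomputable def globalQ {m k : ℕ} (Cl : Fin k → Finset (EuclideanSpace ℝ (Fin m))) (ρ : ℝ)
    (x y : EuclideanSpace ℝ (Fin m)) : ℤ :=
  if GlobalConfused Cl ρ x y then 0 else if SameCluster Cl x y then 1 else -1

section Oracle

variable {m k : ℕ}

lemma dist_ctr_le_rad {C : Finset (EuclideanSpace ℝ (Fin m))} {x : EuclideanSpace ℝ (Fin m)}
    (hx : x ∈ C) : dist x (ctr C) ≤ rad C :=
  le_csSup (C.finite_toSet.image _).bddAbove ⟨x, hx, rfl⟩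

lemma dist_le_two_mul_rad_of_dist_ctr_le {C : Finset (EuclideanSpace ℝ (Fin m))}
    {z x : EuclideanSpace ℝ (Fin m)} {ρ : ℝ} (hz : dist z (ctr C) ≤ (2 * ρ - 1) * rad C)
    (hx : x ∈ C) : dist z x ≤ 2 * ρ * rad C := by
  calc dist z x ≤ dist z (ctr C) + dist x (ctr C) := dist_triangle_right _ _ _
    _ ≤ (2 * ρ - 1) * rad C + rad C := add_le_add hz (dist_ctr_le_rad hx)
    _ = 2 * ρ * rad C := by ring

variable {Cl : Fin k → Finset (EuclideanSpace ℝ (Fin m))} {ρ : ℝ}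
  {x y : EuclideanSpace ℝ (Fin m)}

lemma globalQ_eq_one_iff :
    globalQ Cl ρ x y = 1 ↔ ¬ GlobalConfused Cl ρ x y ∧ SameCluster Cl x y := by
  unfold globalQ
  split_ifs <;> simp_all

lemma not_globalConfused_of_dist_le {j : Fin k} (hxu : ∀ i, x ∈ Cl i → i = j)
    (hyu : ∀ i, y ∈ Cl i → i = j) (hxy : dist x y ≤ 2 * ρ * rad (Cl j)) :
    ¬ GlobalConfused Cl ρ x y := by
  rintro (⟨a, b, hab, hxa, hyb, -⟩ | ⟨l, hxl, -, hlt⟩)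
  · exact hab ((hxu a hxa).trans (hyu b hyb).symm)
  · rw [hxu l hxl] at hlt
    exact hlt.not_ge hxy

end Oracle

theorem stmt12_general {m k : ℕ} (X : Finset (EuclideanSpace ℝ (Fin m)))
    (Cl : Fin k → Finset (EuclideanSpace ℝ (Fin m)))
    (hsub : ∀ i, Cl i ⊆ X)
    (hpart : ∀ x ∈ X, ∃! i, x ∈ Cl i)
    (ρ : ℝ)
    (z : Fin k → EuclideanSpace ℝ (Fin m))
    (hz : ∀ j, z j ∈ Cl j)
    (hzgood : ∀ j, dist (z j) (ctr (Cl j)) < (2 * ρ - 1) * rad (Cl j)) :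
    ∀ x ∈ X,
      (∀ j, globalQ Cl ρ (z j) x = 1 ↔ x ∈ Cl j) ∧
      (∃! j, globalQ Cl ρ (z j) x = 1) := by
  intro x hx
  obtain ⟨i, hxi, hxu⟩ := hpart x hx
  have hQ : ∀ j, globalQ Cl ρ (z j) x = 1 ↔ x ∈ Cl j := by
    intro j
    have hzu : ∀ l, z j ∈ Cl l → l = j := fun l hl =>
      (hpart (z j) (hsub j (hz j))).unique hl (hz j)
    rw [globalQ_eq_one_iff]
    constructor
    · rintro ⟨-, l, hzl, hxl⟩
      exact hzu l hzl ▸ hxl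
    · intro hxj
      refine ⟨not_globalConfused_of_dist_le hzu
        (fun l hl => (hxu l hl).trans (hxu j hxj).symm)
        (dist_le_two_mul_rad_of_dist_ctr_le (hzgood j).le hxj), j, hz j, hxj⟩
  exact ⟨hQ, i, (hQ i).2 hxi, fun j hj => hxu j ((hQ j).1 hj)⟩

/-- For ρ ∈ (1/2, 1], if every cluster C_j has a representative z_j with
d(z_j, μ_j) < (2ρ−1)·r(C_j), then for the truthful ρ global distance-weak oracle and
every x ∈ X: Q(z_j, x) = 1 ↔ x ∈ C_j, and exactly one index j has Q(z_j, x) = 1. -/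
theorem stmt12 {m k : ℕ} (X : Finset (EuclideanSpace ℝ (Fin m)))
    (Cl : Fin k → Finset (EuclideanSpace ℝ (Fin m)))
    (hsub : ∀ i, Cl i ⊆ X) (hne : ∀ i, (Cl i).Nonempty)
    (hpart : ∀ x ∈ X, ∃! i, x ∈ Cl i)
    (ρ : ℝ) (hρ0 : 1 / 2 < ρ) (hρ1 : ρ ≤ 1)
    (z : Fin k → EuclideanSpace ℝ (Fin m))
    (hz : ∀ j, z j ∈ Cl j)
    (hzgood : ∀ j, dist (z j) (ctr (Cl j)) < (2 * ρ - 1) * rad (Cl j)) :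
    ∀ x ∈ X,
      (∀ j, globalQ Cl ρ (z j) x = 1 ↔ x ∈ Cl j) ∧
      (∃! j, globalQ Cl ρ (z j) x = 1) :=
  stmt12_general X Cl hsub hpart ρ z hz hzgood
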